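/- Let 0 < ρ < 1 and β > 0. Let F be a finite set of unit vectors in ℝ^d that is a ρ-net of the unit sphere, i.e., for every unit vector u ∈ ℝ^d there exists v ∈ F with ‖u − v‖₂ ≤ ρ. Let (b_v)_{v∈F} be real numbers and define C = {y ∈ ℝ^d : b_v − β ≤ ⟨v, y⟩ ≤ b_v + β for all v ∈ F}. Then for all x, y ∈ C, ‖x − y‖₂ ≤ 2β/(1−ρ). -/

import Mathlib

open MeasureTheory ProbabilityTheory
open scoped Classical

/-- The Gaussian measure `N(μ, I)` on `ℝ^d`, i.e. the product of `d` one-dimensional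
Gaussians of variance `1` centered at the coordinates of `μ`. -/
noncomputable def gaussId (d : ℕ) (μ : EuclideanSpace ℝ (Fin d)) :
    Measure (EuclideanSpace ℝ (Fin d)) :=
  (Measure.pi fun i => gaussianReal (μ i) 1).map
    (MeasurableEquiv.toLp 2 (Fin d → ℝ))

/-- The positive semidefinite square root of a positive semidefinite matrix
(the definition `Matrix.PosSemidef.sqrt` of the older Mathlib, restored for real matrices). -/
noncomputable def Matrix.PosSemidef.sqrt {n : Type*} [Fintype n] [DecidableEq n]
    {A : Matrix n n ℝ} (hA : A.PosSemidef) : Matrix n n ℝ :=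
  hA.1.eigenvectorUnitary.1 * Matrix.diagonal ((√·) ∘ hA.1.eigenvalues) *
    (star hA.1.eigenvectorUnitary : Matrix n n ℝ)

/-- The mean-zero Gaussian measure `N(0, Σ)` on `ℝ^d` with covariance matrix `Σ`:
the pushforward of the standard Gaussian under `x ↦ Σ^{1/2} x`. -/
noncomputable def gaussCov (d : ℕ) {S : Matrix (Fin d) (Fin d) ℝ} (hS : S.PosSemidef) :
    Measure (EuclideanSpace ℝ (Fin d)) :=
  (gaussId d 0).map (fun x =>
    (EuclideanSpace.equiv (Fin d) ℝ).symm (hS.sqrt.mulVec (EuclideanSpace.equiv (Fin d) ℝ x)))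

/-- Total variation distance between two measures:
`sup` over measurable sets `A` of `|P(A) − Q(A)|`. -/
noncomputable def tvDist {Ω : Type*} [MeasurableSpace Ω] (P Q : Measure Ω) : ℝ :=
  ⨆ A : {s : Set Ω // MeasurableSet s}, |(P A).toReal - (Q A).toReal|

/-- The cumulative distribution function of the standard one-dimensional Gaussian. -/
noncomputable def stdPhi (x : ℝ) : ℝ := (gaussianReal 0 1 (Set.Iic x)).toReal

/-- Frobenius norm of a matrix. -/
noncomputable def frob {d : ℕ} (A : Matrix (Fin d) (Fin d) ℝ) : ℝ :=
  Real.sqrt (∑ i, ∑ j, (A i j) ^ 2)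

/-- The empirical mean of a finite set of points. -/
noncomputable def empMean {d : ℕ} (G : Finset (EuclideanSpace ℝ (Fin d))) :
    EuclideanSpace ℝ (Fin d) :=
  (G.card : ℝ)⁻¹ • ∑ x ∈ G, x

/-- The expectation of `f` under the uniform distribution over the finite set `G`. -/
noncomputable def empExp {α : Type*} (G : Finset α) (f : α → ℝ) : ℝ :=
  (∑ x ∈ G, f x) / G.card

/-- The probability of the event `p` under the uniform distribution over `G`. -/
noncomputable def empProb {α : Type*} (G : Finset α) (p : α → Prop) : ℝ :=
  ((G.filter p).card : ℝ) / G.card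

/-- `φ(S', G) = |G ∖ G'| / |S'|` where `G' = S' ∩ G`. -/
noncomputable def phiF {α : Type*} (S' G : Finset α) : ℝ := ((G \ S').card : ℝ) / S'.card

/-- `ψ(S', G) = |E'| / |S'|` where `E' = S' ∩ E`. -/
noncomputable def psiF {α : Type*} (S' E : Finset α) : ℝ := ((S' ∩ E).card : ℝ) / S'.card

/-- `Δ(S', G) = ψ(S', G) + φ(S', G) log(1/φ(S', G))`. -/
noncomputable def deltaF {α : Type*} (S' G E : Finset α) : ℝ :=
  psiF S' E + phiF S' G * Real.log (1 / phiF S' G)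

/-- The even degree-2 polynomial `x ↦ xᵀ A x + c`. -/
noncomputable def quadPoly {d : ℕ} (A : Matrix (Fin d) (Fin d) ℝ) (c : ℝ)
    (x : EuclideanSpace ℝ (Fin d)) : ℝ :=
  (∑ i, ∑ j, A i j * x i * x j) + c

/-- The general even polynomial of degree at most 4,
`x ↦ ∑ T i j k l * xᵢxⱼxₖxₗ + xᵀ A x + c`. -/
noncomputable def quartPoly {d : ℕ} (T : Fin d → Fin d → Fin d → Fin d → ℝ)
    (A : Matrix (Fin d) (Fin d) ℝ) (c : ℝ) (x : EuclideanSpace ℝ (Fin d)) : ℝ :=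
  (∑ i, ∑ j, ∑ k, ∑ l, T i j k l * x i * x j * x k * x l)
    + (∑ i, ∑ j, A i j * x i * x j) + c

/-- `(η, δ)`-goodness of a finite set `G` with respect to `N(μ, I)`, with universal
constant `C₀` in the boundedness condition. -/
structure IsGood (d : ℕ) (η δ C₀ : ℝ) (μ : EuclideanSpace ℝ (Fin d))
    (G : Finset (EuclideanSpace ℝ (Fin d))) : Prop where
  bounded : ∀ x ∈ G, ‖x - μ‖ ^ 2 ≤ C₀ * d * Real.log (G.card / δ)
  affine : ∀ (w : EuclideanSpace ℝ (Fin d)) (b : ℝ),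
    |empProb G (fun x => 0 ≤ (∑ i, w i * x i) + b)
      - ((gaussId d μ) {x | 0 ≤ (∑ i, w i * x i) + b}).toReal|
      ≤ η / (d * Real.log (d / (η * δ)))
  meanClose : ‖empMean G - μ‖ ≤ η
  covClose : ∀ v : EuclideanSpace ℝ (Fin d), ‖v‖ = 1 →
    |empExp G (fun x => (∑ i, v i * (x i - empMean G i)) ^ 2) - 1| ≤ η / d
  polyMean : ∀ (A : Matrix (Fin d) (Fin d) ℝ) (c : ℝ),
    |empExp G (quadPoly A c) - ∫ x, quadPoly A c x ∂(gaussId d μ)|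
      ≤ η * Real.sqrt (∫ x, (quadPoly A c x) ^ 2 ∂(gaussId d μ))
  polySq : ∀ (A : Matrix (Fin d) (Fin d) ℝ) (c : ℝ),
    |empExp G (fun x => (quadPoly A c x) ^ 2) - ∫ x, (quadPoly A c x) ^ 2 ∂(gaussId d μ)|
      ≤ η * ∫ x, (quadPoly A c x) ^ 2 ∂(gaussId d μ)
  polyTail : ∀ (A : Matrix (Fin d) (Fin d) ℝ) (c : ℝ),
    empProb G (fun x => 0 ≤ quadPoly A c x)
      ≤ ((gaussId d μ) {x | 0 ≤ quadPoly A c x}).toReal + η / (d * Real.log (G.card / δ))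

/-- `(η, δ)`-goodness of a finite set `G` with respect to `N(0, Σ)`, with universal
constant `C₀` in the boundedness condition. -/
structure IsGoodCov (d : ℕ) (η δ C₀ : ℝ) {S : Matrix (Fin d) (Fin d) ℝ} (hS : S.PosSemidef)
    (G : Finset (EuclideanSpace ℝ (Fin d))) : Prop where
  bounded : ∀ x ∈ G, (∑ i, ∑ j, x i * S⁻¹ i j * x j) ≤ C₀ * d * Real.log (G.card / δ)
  deg2Mean : ∀ (A : Matrix (Fin d) (Fin d) ℝ) (c : ℝ),
    |empExp G (quadPoly A c) - ∫ x, quadPoly A c x ∂(gaussCov d hS)|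
      ≤ η * Real.sqrt (∫ x, (quadPoly A c x) ^ 2 ∂(gaussCov d hS))
  deg2Sq : ∀ (A : Matrix (Fin d) (Fin d) ℝ) (c : ℝ),
    |empExp G (fun x => (quadPoly A c x) ^ 2) - ∫ x, (quadPoly A c x) ^ 2 ∂(gaussCov d hS)|
      ≤ η * ∫ x, (quadPoly A c x) ^ 2 ∂(gaussCov d hS)
  deg2Tail : ∀ (A : Matrix (Fin d) (Fin d) ℝ) (c : ℝ),
    empProb G (fun x => 0 ≤ quadPoly A c x)
      ≤ ((gaussCov d hS) {x | 0 ≤ quadPoly A c x}).toReal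
        + η ^ 2 / (d * Real.log (G.card / δ))
  deg4Mean : ∀ (T : Fin d → Fin d → Fin d → Fin d → ℝ) (A : Matrix (Fin d) (Fin d) ℝ) (c : ℝ),
    |empExp G (quartPoly T A c) - ∫ x, quartPoly T A c x ∂(gaussCov d hS)|
      ≤ η * Real.sqrt (∫ x, (quartPoly T A c x
          - ∫ y, quartPoly T A c y ∂(gaussCov d hS)) ^ 2 ∂(gaussCov d hS))
  deg4Tail : ∀ (T : Fin d → Fin d → Fin d → Fin d → ℝ) (A : Matrix (Fin d) (Fin d) ℝ) (c : ℝ),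
    empProb G (fun x => 0 ≤ quartPoly T A c x)
      ≤ ((gaussCov d hS) {x | 0 ≤ quartPoly T A c x}).toReal
        + η ^ 2 / (2 * Real.log (1 / η) * (d * Real.log (G.card / δ)) ^ 2)

/-- The trace norm (Schatten-1 norm) of a matrix: the trace of `(AᵀA)^{1/2}`. -/
noncomputable def traceNorm {d : ℕ} (A : Matrix (Fin d) (Fin d) ℝ) : ℝ :=
  ((Matrix.posSemidef_conjTranspose_mul_self A).sqrt).trace

open scoped RealInnerProductSpace

/-- If `F` is a `ρ`-net of unit vectors in `ℝ^d` and
`C = {y : b_v − β ≤ ⟨v, y⟩ ≤ b_v + β for all v ∈ F}`, then `C` has diameter at most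
`2β/(1−ρ)`. -/
theorem slab_intersection_diameter {d : ℕ} (ρ β : ℝ) (hρ0 : 0 < ρ) (hρ1 : ρ < 1) (hβ : 0 < β)
    (F : Finset (EuclideanSpace ℝ (Fin d)))
    (hunit : ∀ v ∈ F, ‖v‖ = 1)
    (hnet : ∀ u : EuclideanSpace ℝ (Fin d), ‖u‖ = 1 → ∃ v ∈ F, ‖u - v‖ ≤ ρ)
    (b : EuclideanSpace ℝ (Fin d) → ℝ)
    (C : Set (EuclideanSpace ℝ (Fin d)))
    (hC : C = {y | ∀ v ∈ F, b v - β ≤ (∑ i, v i * y i) ∧ (∑ i, v i * y i) ≤ b v + β}) :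
    ∀ x ∈ C, ∀ y ∈ C, ‖x - y‖ ≤ 2 * β / (1 - ρ) := by
  subst hC
  intro x hx y hy
  have h1ρ : 0 < 1 - ρ := by linarith
  by_cases hz : x - y = 0
  · rw [hz, norm_zero]
    positivity
  · set z := x - y with hzdef
    have hzn : (0 : ℝ) < ‖z‖ := norm_pos_iff.mpr hz
    have hu : ‖(‖z‖⁻¹ • z : EuclideanSpace ℝ (Fin d))‖ = 1 := by
      rw [norm_smul, norm_inv, norm_norm, inv_mul_cancel₀ hzn.ne']
    obtain ⟨v, hvF, hvρ⟩ := hnet _ hu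
    have hvx := hx v hvF
    have hvy := hy v hvF
    -- ⟨v, z⟩ ≤ 2β
    have hinner : ∀ w : EuclideanSpace ℝ (Fin d), (∑ i, v i * w i) = ⟪v, w⟫ := by
      intro w
      simp [PiLp.inner_apply, RCLike.inner_apply]
      exact Finset.sum_congr rfl fun i _ => mul_comm _ _
    have hvz : ⟪v, z⟫ ≤ 2 * β := by
      have : ⟪v, z⟫ = ⟪v, x⟫ - ⟪v, y⟫ := by
        rw [hzdef, inner_sub_right]
      rw [this, ← hinner, ← hinner]
      linarith [hvx.2, hvy.1]
    -- lower bound: ⟨v, z⟩ ≥ (1-ρ)‖z‖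
    have huz : ⟪(‖z‖⁻¹ • z : EuclideanSpace ℝ (Fin d)), z⟫ = ‖z‖ := by
      rw [real_inner_smul_left, real_inner_self_eq_norm_sq]
      field_simp
    have hdiff : ⟪(‖z‖⁻¹ • z : EuclideanSpace ℝ (Fin d)) - v, z⟫ ≤ ρ * ‖z‖ := by
      calc ⟪(‖z‖⁻¹ • z : EuclideanSpace ℝ (Fin d)) - v, z⟫
          ≤ ‖(‖z‖⁻¹ • z : EuclideanSpace ℝ (Fin d)) - v‖ * ‖z‖ :=
            real_inner_le_norm _ _
        _ ≤ ρ * ‖z‖ := by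
            apply mul_le_mul_of_nonneg_right hvρ hzn.le
    have hlow : (1 - ρ) * ‖z‖ ≤ ⟪v, z⟫ := by
      have := inner_sub_left (𝕜 := ℝ) (‖z‖⁻¹ • z : EuclideanSpace ℝ (Fin d)) v z
      rw [huz] at this
      nlinarith
    have hfin : (1 - ρ) * ‖z‖ ≤ 2 * β := le_trans hlow hvz
    rw [le_div_iff₀ h1ρ]
    nlinarith
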